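/- arXiv:1208.1793 — 4 statements merged into one kernel-verified Lean document; each statement's English description precedes it below -/
import Mathlib

section
/- Under the protocol interference model, the number of senders that can transmit concurrently without mutual interference inside a square region of side length ρ (the interference-aware region) is at most 16ρ²/(ρ−1)². -/
set_option maxHeartbeats 1000000


/-- Under PrIM (transmission range 1, interference radius ρ > 1), the number of links
that can transmit concurrently without interference with all senders inside a
square of side ρ is at most 16ρ²/(ρ−1)². -/
theorem prim_concurrent_senders_bound (ρ : ℝ) (hρ : 1 < ρ)
    (a b : ℝ) (ι : Type*) (L : Finset ι)
    (u r : ι → EuclideanSpace ℝ (Fin 2))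
    (hrange : ∀ i ∈ L, dist (u i) (r i) ≤ 1)
    (hin : ∀ i ∈ L, (u i) 0 ∈ Set.Icc a (a + ρ) ∧ (u i) 1 ∈ Set.Icc b (b + ρ))
    (hnoint : ∀ i ∈ L, ∀ j ∈ L, i ≠ j → ρ < dist (u i) (r j)) :
    (L.card : ℝ) ≤ 16 * ρ ^ 2 / (ρ - 1) ^ 2 := by
  have hsqrt2 : (0:ℝ) < Real.sqrt 2 := Real.sqrt_pos.2 (by norm_num)
  have hsq2 : Real.sqrt 2 ^ 2 = 2 := Real.sq_sqrt (by norm_num)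
  have hsqrt2lt : Real.sqrt 2 < 1.5 := by
    rw [show (1.5:ℝ) = Real.sqrt (1.5^2) by rw [Real.sqrt_sq]; norm_num]
    exact Real.sqrt_lt_sqrt (by norm_num) (by norm_num)
  set s : ℝ := (ρ - 1) / Real.sqrt 2 with hs_def
  have hs : 0 < s := div_pos (by linarith) hsqrt2
  -- pairwise distance between senders > ρ - 1
  have hpair : ∀ i ∈ L, ∀ j ∈ L, i ≠ j → ρ - 1 < dist (u i) (u j) := by
    intro i hi j hj hij
    have h1 := hnoint i hi j hj hij
    have h2 := hrange j hj
    have h3 := dist_triangle (u i) (u j) (r j)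
    linarith
  -- grid map
  set f : ι → ℤ × ℤ := fun i => (⌊((u i) 0 - a) / s⌋, ⌊((u i) 1 - b) / s⌋) with hf_def
  set M : ℤ := ⌊ρ / s⌋ with hM_def
  have hM0 : 0 ≤ M := Int.floor_nonneg.2 (le_of_lt (div_pos (by linarith) hs))
  have hsame : ∀ x y : ℝ, ⌊x⌋ = ⌊y⌋ → |x - y| < 1 := by
    intro x y h
    have h1 := Int.floor_le x
    have h2 := Int.floor_le y
    have h3 := Int.lt_floor_add_one x
    have h4 := Int.lt_floor_add_one y
    rw [h] at h1 h3
    rw [abs_lt]; constructor <;> push_cast at * <;> linarith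
  -- injectivity on L
  have hinj : Set.InjOn f L := by
    intro i hi j hj hij
    by_contra hne
    have h0 : |((u i) 0 - a) / s - ((u j) 0 - a) / s| < 1 :=
      hsame _ _ (congrArg Prod.fst hij)
    have h1 : |((u i) 1 - b) / s - ((u j) 1 - b) / s| < 1 :=
      hsame _ _ (congrArg Prod.snd hij)
    have e0 : ((u i) 0 - a) / s - ((u j) 0 - a) / s = ((u i) 0 - (u j) 0) / s := by ring
    have e1 : ((u i) 1 - b) / s - ((u j) 1 - b) / s = ((u i) 1 - (u j) 1) / s := by ring
    rw [e0, abs_div, abs_of_pos hs, div_lt_one hs] at h0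
    rw [e1, abs_div, abs_of_pos hs, div_lt_one hs] at h1
    have hd := hpair i hi j hj hne
    have hdist : dist (u i) (u j) ^ 2 = ((u i) 0 - (u j) 0) ^ 2 + ((u i) 1 - (u j) 1) ^ 2 := by
      rw [EuclideanSpace.dist_eq]
      rw [Real.sq_sqrt (by positivity)]
      rw [Fin.sum_univ_two, Real.dist_eq, Real.dist_eq, sq_abs, sq_abs]
    have hs2 : 2 * s ^ 2 = (ρ - 1) ^ 2 := by
      rw [hs_def, div_pow, hsq2]; field_simp
    have habs0 : ((u i) 0 - (u j) 0) ^ 2 ≤ s ^ 2 := by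
      nlinarith [abs_nonneg ((u i) 0 - (u j) 0), sq_abs ((u i) 0 - (u j) 0), h0]
    have habs1 : ((u i) 1 - (u j) 1) ^ 2 ≤ s ^ 2 := by
      nlinarith [abs_nonneg ((u i) 1 - (u j) 1), sq_abs ((u i) 1 - (u j) 1), h1]
    nlinarith [hd, hdist, hs2, habs0, habs1, dist_nonneg (x := u i) (y := u j)]
  -- image lands in Icc 0 M × Icc 0 M
  have hmaps : ∀ i ∈ L, f i ∈ (Finset.Icc (0:ℤ) M) ×ˢ (Finset.Icc (0:ℤ) M) := by
    intro i hi
    obtain ⟨⟨hx1, hx2⟩, ⟨hy1, hy2⟩⟩ := hin i hi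
    simp only [Finset.mem_product, Finset.mem_Icc]
    refine ⟨⟨Int.floor_nonneg.2 (div_nonneg (by linarith) hs.le), ?_⟩, ⟨Int.floor_nonneg.2 (div_nonneg (by linarith) hs.le), ?_⟩⟩
    · exact Int.floor_le_floor (by apply div_le_div_of_nonneg_right _ hs.le; linarith)
    · exact Int.floor_le_floor (by apply div_le_div_of_nonneg_right _ hs.le; linarith)
  have hcard : L.card ≤ ((Finset.Icc (0:ℤ) M) ×ˢ (Finset.Icc (0:ℤ) M)).card :=
    Finset.card_le_card_of_injOn f hmaps hinj
  have hcard2 : ((Finset.Icc (0:ℤ) M) ×ˢ (Finset.Icc (0:ℤ) M)).card = ((M + 1).toNat) ^ 2 := by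
    rw [Finset.card_product, Int.card_Icc]
    simp [sq]
  have hMreal : ((M + 1).toNat : ℝ) = (M : ℝ) + 1 := by
    have : (0:ℤ) ≤ M + 1 := by linarith
    exact_mod_cast Int.toNat_of_nonneg this
  have hMle : (M : ℝ) ≤ ρ / s := Int.floor_le _
  have key : (L.card : ℝ) ≤ (ρ / s + 1) ^ 2 := by
    calc (L.card : ℝ) ≤ (((M + 1).toNat : ℕ) ^ 2 : ℕ) := by
          exact_mod_cast hcard.trans_eq hcard2
      _ = ((M + 1).toNat : ℝ) ^ 2 := by push_cast; ring
      _ = ((M : ℝ) + 1) ^ 2 := by rw [hMreal]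
      _ ≤ (ρ / s + 1) ^ 2 := by
          apply pow_le_pow_left₀ (by positivity) (by linarith) 2
  refine key.trans ?_
  have hρs : ρ / s = Real.sqrt 2 * ρ / (ρ - 1) := by
    rw [hs_def]; field_simp
  rw [hρs, div_add' _ _ _ (by linarith : (ρ:ℝ) - 1 ≠ 0), div_pow]
  have hden : (0:ℝ) < (ρ - 1) ^ 2 := pow_pos (by linarith) 2
  have hρpos : (0:ℝ) < ρ := by linarith
  have hm1 : (0:ℝ) < ρ - 1 := by linarith
  apply div_le_div_of_nonneg_right ?_ hden.le
  have h : (0:ℝ) ≤ (1.5 - Real.sqrt 2) * (ρ * (ρ - 1)) :=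
    mul_nonneg (by linarith) (mul_nonneg hρpos.le hm1.le)
  nlinarith [hsq2, h, hρpos, hm1]
end

section
/- Under the RTS/CTS interference model with transmission range 1, the number of senders that can transmit concurrently inside a square of side length 2 (the interference-aware region) is at most 36. -/
/-- Cell bound: for `t ∈ [0,2]`, with `k = min 5 ⌊3t⌋₊`, we have `k ≤ 3t ≤ k+1`. -/
lemma cell_bounds (t : ℝ) (h0 : 0 ≤ t) (h2 : t ≤ 2) :
    ((min 5 ⌊3*t⌋₊ : ℕ) : ℝ) ≤ 3*t ∧ 3*t ≤ ((min 5 ⌊3*t⌋₊ : ℕ) : ℝ) + 1 := by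
  constructor
  · calc ((min 5 ⌊3*t⌋₊ : ℕ) : ℝ) ≤ (⌊3*t⌋₊ : ℝ) := by exact_mod_cast min_le_right _ _
      _ ≤ 3*t := Nat.floor_le (by linarith)
  · rcases le_or_gt ⌊3*t⌋₊ 5 with h | h
    · rw [min_eq_right h]
      have := Nat.lt_floor_add_one (3*t)
      push_cast at this ⊢
      linarith
    · rw [min_eq_left h.le]
      push_cast
      linarith

lemma same_cell (s t : ℝ) (hs0 : 0 ≤ s) (hs2 : s ≤ 2) (ht0 : 0 ≤ t) (ht2 : t ≤ 2)
    (h : min 5 ⌊3*s⌋₊ = min 5 ⌊3*t⌋₊) : |s - t| ≤ 1/3 := by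
  obtain ⟨h1, h2⟩ := cell_bounds s hs0 hs2
  obtain ⟨h3, h4⟩ := cell_bounds t ht0 ht2
  rw [h] at h1 h2
  rw [abs_le]
  constructor <;> linarith

/-- Under the RTS/CTS interference model (transmission range 1), the number of links
that can transmit concurrently with all senders inside a square of side 2 is at most 36. -/
theorem rtscts_concurrent_senders_bound
    (a b : ℝ) (ι : Type*) (L : Finset ι)
    (u r : ι → EuclideanSpace ℝ (Fin 2))
    (hrange : ∀ i ∈ L, dist (u i) (r i) ≤ 1)
    (hin : ∀ i ∈ L, (u i) 0 ∈ Set.Icc a (a + 2) ∧ (u i) 1 ∈ Set.Icc b (b + 2))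
    (hnoconf : ∀ i ∈ L, ∀ j ∈ L, i ≠ j →
      1 < dist (u i) (u j) ∧ 1 < dist (u i) (r j) ∧
      1 < dist (r i) (u j) ∧ 1 < dist (r i) (r j)) :
    L.card ≤ 36 := by
  classical
  set f : ι → ℕ × ℕ := fun i =>
    (min 5 ⌊3*((u i 0) - a)⌋₊, min 5 ⌊3*((u i 1) - b)⌋₊) with hf
  have hmaps : ∀ i ∈ L, f i ∈ Finset.range 6 ×ˢ Finset.range 6 := by
    intro i _
    simp only [hf, Finset.mem_product, Finset.mem_range]
    constructor <;> exact lt_of_le_of_lt (min_le_left _ _) (by norm_num)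
  have hinj : Set.InjOn f L := by
    intro i hi j hj hij
    by_contra hne
    obtain ⟨hxi1, hxi2⟩ := hin i hi
    obtain ⟨hxj1, hxj2⟩ := hin j hj
    have hx : |(u i 0 - a) - (u j 0 - a)| ≤ 1/3 :=
      same_cell _ _ (by linarith [hxi1.1]) (by linarith [hxi1.2])
        (by linarith [hxj1.1]) (by linarith [hxj1.2]) (congrArg Prod.fst hij)
    have hy : |(u i 1 - b) - (u j 1 - b)| ≤ 1/3 :=
      same_cell _ _ (by linarith [hxi2.1]) (by linarith [hxi2.2])
        (by linarith [hxj2.1]) (by linarith [hxj2.2]) (congrArg Prod.snd hij)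
    have hd := (hnoconf i hi j hj hne).1
    have hdist : dist (u i) (u j) ≤ Real.sqrt (2/9) := by
      rw [EuclideanSpace.dist_eq, Fin.sum_univ_two]
      simp only [Real.dist_eq, sq_abs]
      apply Real.sqrt_le_sqrt
      have hx' : (u i 0 - u j 0)^2 ≤ (1/3)^2 := by
        rw [← sq_abs]
        have : |u i 0 - u j 0| ≤ 1/3 := by
          have := hx; rw [show (u i 0 - a) - (u j 0 - a) = u i 0 - u j 0 by ring] at this
          exact this
        nlinarith [abs_nonneg (u i 0 - u j 0)]
      have hy' : (u i 1 - u j 1)^2 ≤ (1/3)^2 := by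
        rw [← sq_abs]
        have : |u i 1 - u j 1| ≤ 1/3 := by
          have := hy; rw [show (u i 1 - b) - (u j 1 - b) = u i 1 - u j 1 by ring] at this
          exact this
        nlinarith [abs_nonneg (u i 1 - u j 1)]
      nlinarith
    have : Real.sqrt (2/9) < 1 := by
      rw [show (1:ℝ) = Real.sqrt 1 by simp]
      exact Real.sqrt_lt_sqrt (by norm_num) (by norm_num)
    linarith
  calc L.card ≤ (Finset.range 6 ×ˢ Finset.range 6).card :=
        Finset.card_le_card_of_injOn f hmaps hinj
    _ = 36 := by simp
end

section
/- (Knapsack two-candidate approximation) Let items 1..m have sizes sᵢ ∈ (0,1] and weights wᵢ ≥ 0, and let 0 < d ≤ 1. Let A₁ be a maximum-weight single item (with sᵢ ≤ 1), and let A₂ be an optimal solution to the knapsack problem with capacity d. Then max(w(A₁), w(A₂)) ≥ (d/2)·OPT(1), where OPT(1) is the optimal knapsack value with capacity 1. -/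
open Finset

/-- Two-candidate knapsack approximation: with item sizes in (0,1], weights ≥ 0 and
`0 < d ≤ 1`, the better of (a) a maximum-weight single item and (b) an optimal
knapsack solution of capacity `d` has weight at least `(d/2)·OPT(1)`. -/
theorem knapsack_two_candidates (m : ℕ) (s w : Fin m → ℝ)
    (hs : ∀ i, 0 < s i ∧ s i ≤ 1) (hw : ∀ i, 0 ≤ w i)
    (d : ℝ) (hd : 0 < d) (hd1 : d ≤ 1)
    (i₁ : Fin m) (hbest : ∀ j, w j ≤ w i₁)
    (A₂ : Finset (Fin m)) (hA₂ : ∑ i ∈ A₂, s i ≤ d)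
    (hopt : ∀ S : Finset (Fin m), ∑ i ∈ S, s i ≤ d → ∑ i ∈ S, w i ≤ ∑ i ∈ A₂, w i) :
    ∀ S : Finset (Fin m), ∑ i ∈ S, s i ≤ 1 →
      d / 2 * ∑ i ∈ S, w i ≤ max (w i₁) (∑ i ∈ A₂, w i) := by
  intro S hS1
  have hwS0 : 0 ≤ ∑ i ∈ S, w i := Finset.sum_nonneg fun i _ => hw i
  have hA2w : 0 ≤ ∑ i ∈ A₂, w i := Finset.sum_nonneg fun i _ => hw i
  have hmax : (w i₁ + ∑ i ∈ A₂, w i) / 2 ≤ max (w i₁) (∑ i ∈ A₂, w i) := by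
    rcases le_total (w i₁) (∑ i ∈ A₂, w i) with h | h
    · rw [max_eq_right h]; linarith
    · rw [max_eq_left h]; linarith
  by_cases hcase : ∑ i ∈ S, s i ≤ d
  · have h1 : ∑ i ∈ S, w i ≤ ∑ i ∈ A₂, w i := hopt S hcase
    have h2 : d / 2 * ∑ i ∈ S, w i ≤ ∑ i ∈ A₂, w i := by nlinarith
    exact h2.trans (le_max_right _ _)
  push_neg at hcase
  -- lexicographic key: density, then index (to break ties)
  set key : Fin m → ℝ ×ₗ Fin m := fun i => toLex (w i / s i, i) with hkeydef
  have key_lt_density : ∀ x y : Fin m, key x < key y → w x / s x ≤ w y / s y := by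
    intro x y h
    rw [hkeydef] at h
    rw [Prod.Lex.lt_iff] at h
    rcases h with h | ⟨h, _⟩
    · exact le_of_lt h
    · exact le_of_eq h
  have key_inj : ∀ x y : Fin m, key x = key y → x = y := by
    intro x y h
    have := toLex.injective h
    exact congrArg Prod.snd this
  -- the "bad" set: elements whose density-upward closure overflows capacity d
  set B : Finset (Fin m) :=
    S.filter (fun i => d < ∑ x ∈ S.filter (fun y => key i ≤ key y), s x) with hBdef
  have hSne : S.Nonempty := by
    rcases S.eq_empty_or_nonempty with h | h
    · rw [h] at hcase; simp at hcase; linarith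
    · exact h
  have hBne : B.Nonempty := by
    obtain ⟨i0, hi0S, hi0min⟩ := Finset.exists_min_image S key hSne
    refine ⟨i0, ?_⟩
    rw [hBdef, Finset.mem_filter]
    refine ⟨hi0S, ?_⟩
    have : S.filter (fun y => key i0 ≤ key y) = S :=
      Finset.filter_true_of_mem fun x hx => hi0min x hx
    rw [this]; exact hcase
  obtain ⟨j, hjB, hjmax⟩ := Finset.exists_max_image B key hBne
  have hjB' : j ∈ S ∧ d < ∑ x ∈ S.filter (fun y => key j ≤ key y), s x := by
    rw [hBdef] at hjB; exact Finset.mem_filter.mp hjB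
  have hjS : j ∈ S := hjB'.1
  have hjd : d < ∑ x ∈ S.filter (fun y => key j ≤ key y), s x := hjB'.2
  set T : Finset (Fin m) := S.filter (fun x => key j < key x) with hTdef
  have hTS : T ⊆ S := Finset.filter_subset _ _
  have hjT : j ∉ T := by
    intro h
    exact lt_irrefl (key j) (Finset.mem_filter.mp (h)).2
  -- the upward closure of j equals insert j T
  have hUj : S.filter (fun y => key j ≤ key y) = insert j T := by
    ext x
    simp only [Finset.mem_filter, Finset.mem_insert, hTdef]
    constructor
    · rintro ⟨hxS, hle⟩
      rcases lt_or_eq_of_le hle with h | h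
      · exact Or.inr ⟨hxS, h⟩
      · exact Or.inl (key_inj _ _ h.symm)
    · rintro (rfl | ⟨hxS, hlt⟩)
      · exact ⟨hjS, le_refl _⟩
      · exact ⟨hxS, le_of_lt hlt⟩
  -- T fits in capacity d (else its minimal element would beat j in B)
  have hTd : ∑ i ∈ T, s i ≤ d := by
    by_contra hTd
    push_neg at hTd
    have hTne : T.Nonempty := by
      rcases T.eq_empty_or_nonempty with h | h
      · rw [h] at hTd; simp at hTd; linarith
      · exact h
    obtain ⟨j', hj'T, hj'min⟩ := Finset.exists_min_image T key hTne
    have hj'lt : key j < key j' := (Finset.mem_filter.mp (hj'T)).2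
    have hUj' : S.filter (fun y => key j' ≤ key y) = T := by
      ext x
      simp only [Finset.mem_filter, hTdef]
      constructor
      · rintro ⟨hxS, hle⟩
        exact ⟨hxS, lt_of_lt_of_le hj'lt hle⟩
      · rintro ⟨hxS, hlt⟩
        exact ⟨hxS, hj'min x (Finset.mem_filter.mpr ⟨hxS, hlt⟩)⟩
    have hj'B : j' ∈ B := by
      rw [hBdef, Finset.mem_filter]
      exact ⟨hTS hj'T, by rw [hUj']; exact hTd⟩
    exact absurd (hjmax j' hj'B) (not_le.mpr hj'lt)
  -- overflow: s(T) + s(j) > d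
  have hσd : d < ∑ i ∈ T, s i + s j := by
    have := hjd
    rw [hUj, Finset.sum_insert hjT] at this
    linarith
  -- density bounds
  set ρ : ℝ := w j / s j with hρdef
  have hρ0 : 0 ≤ ρ := div_nonneg (hw j) (le_of_lt (hs j).1)
  have hρT : ρ * ∑ i ∈ T, s i ≤ ∑ i ∈ T, w i := by
    rw [Finset.mul_sum]
    apply Finset.sum_le_sum
    intro i hi
    have hlt : key j < key i := (Finset.mem_filter.mp (hi)).2
    have hdens : ρ ≤ w i / s i := key_lt_density _ _ hlt
    have := (hs i).1
    rw [div_le_div_iff₀ (hs j).1 this] at hdens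
    calc ρ * s i = w j / s j * s i := rfl
      _ ≤ w i := by
          rw [div_mul_eq_mul_div, div_le_iff₀ (hs j).1]
          linarith [hdens]
  have hρj : ρ * s j = w j := div_mul_cancel₀ (w j) (ne_of_gt (hs j).1)
  -- split S into (insert j T) and rest
  have hUjS : insert j T ⊆ S := by rw [← hUj]; exact Finset.filter_subset _ _
  have hsplitw : ∑ i ∈ S \ insert j T, w i + ∑ i ∈ insert j T, w i = ∑ i ∈ S, w i :=
    Finset.sum_sdiff hUjS
  have hsplits : ∑ i ∈ S \ insert j T, s i + ∑ i ∈ insert j T, s i = ∑ i ∈ S, s i :=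
    Finset.sum_sdiff hUjS
  have hsins : ∑ i ∈ insert j T, s i = s j + ∑ i ∈ T, s i := Finset.sum_insert hjT
  have hwins : ∑ i ∈ insert j T, w i = w j + ∑ i ∈ T, w i := Finset.sum_insert hjT
  -- rest has low density
  have hrest : ∑ i ∈ S \ insert j T, w i ≤ ρ * ∑ i ∈ S \ insert j T, s i := by
    rw [Finset.mul_sum]
    apply Finset.sum_le_sum
    intro x hx
    have hxS : x ∈ S := (Finset.mem_sdiff.mp hx).1
    have hxn : x ∉ insert j T := (Finset.mem_sdiff.mp hx).2
    have hxlt : key x < key j := by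
      by_contra h
      push_neg at h
      exact hxn (hUj ▸ Finset.mem_filter.mpr ⟨hxS, h⟩ : x ∈ insert j T)
    have hdens : w x / s x ≤ ρ := key_lt_density _ _ hxlt
    have := (hs x).1
    rw [hρdef, div_le_div_iff₀ this (hs j).1] at hdens
    rw [hρdef, div_mul_eq_mul_div, le_div_iff₀ (hs j).1]
    linarith [hdens]
  have hsR0 : 0 ≤ ∑ i ∈ S \ insert j T, s i :=
    Finset.sum_nonneg fun i _ => le_of_lt (hs i).1
  -- candidate bounds
  have hwT : ∑ i ∈ T, w i ≤ ∑ i ∈ A₂, w i := hopt T hTd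
  have hwj : w j ≤ w i₁ := hbest j
  -- main arithmetic: d * w(S) ≤ w(T) + w(j)
  set σ : ℝ := ∑ i ∈ T, s i + s j with hσ
  set W1 : ℝ := ∑ i ∈ T, w i + w j with hW1
  have hW10 : 0 ≤ W1 := by
    have : 0 ≤ ∑ i ∈ T, w i := Finset.sum_nonneg fun i _ => hw i
    rw [hW1]; linarith [hw j]
  have hρσ : ρ * σ ≤ W1 := by rw [hσ, hW1, mul_add, hρj]; linarith [hρT]
  have hsS : σ + ∑ i ∈ S \ insert j T, s i = ∑ i ∈ S, s i := by
    rw [hσ]; rw [hsins] at hsplits; linarith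
  have hwSsplit : ∑ i ∈ S, w i ≤ W1 + ρ * ∑ i ∈ S \ insert j T, s i := by
    rw [hW1]; rw [hwins] at hsplitw; linarith [hrest]
  have hkey2 : d * ∑ i ∈ S, w i ≤ W1 := by
    set sR : ℝ := ∑ i ∈ S \ insert j T, s i
    have h1 : σ + sR ≤ 1 := by rw [hsS]; exact hS1
    have hσ1 : σ ≤ 1 := by linarith
    nlinarith [mul_nonneg hρ0 hsR0, mul_le_mul_of_nonneg_left hwSsplit (le_of_lt (lt_trans hd hσd)),
      mul_le_mul_of_nonneg_right hρσ hsR0, mul_le_mul_of_nonneg_left hW10 hsR0,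
      mul_le_mul_of_nonneg_right (le_of_lt hσd) hwS0, mul_nonneg hW10 hsR0]
  have hfin : W1 ≤ w i₁ + ∑ i ∈ A₂, w i := by rw [hW1]; linarith
  calc d / 2 * ∑ i ∈ S, w i = d * (∑ i ∈ S, w i) / 2 := by ring
    _ ≤ W1 / 2 := by linarith
    _ ≤ (w i₁ + ∑ i ∈ A₂, w i) / 2 := by linarith
    _ ≤ max (w i₁) (∑ i ∈ A₂, w i) := hmax
end

section
/- For the 0-1 knapsack problem with item sizes in (0,1] and capacity d ∈ (0,1], any optimal fractional greedy prefix argument yields: there exists either a single item of weight ≥ (d/2)·OPT(1), or a feasible set for capacity d of weight ≥ (d/2)·OPT(1). Concretely: if S* is an optimal set for capacity 1, then by greedily packing items of S* (in any order) into capacity d, either one item of S* alone has weight ≥ (d/2)·w(S*), or the packed prefix has weight ≥ (d/2)·w(S*). -/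
open Finset

/-- Greedy prefix construction: from any finite set `T` whose total size exceeds `c ≥ 0`,
we can extract a prefix `P` of total size at most `c`, a critical element `j`, and a
density threshold `ρ` separating `P ∪ {j}` from the rest. -/
lemma greedy_prefix {ι : Type*} [DecidableEq ι] (s w : ι → ℝ)
    (hs : ∀ i, 0 < s i) (hw : ∀ i, 0 ≤ w i) :
    ∀ n (T : Finset ι), T.card = n → ∀ c : ℝ, 0 ≤ c → c < ∑ i ∈ T, s i →
    ∃ P ⊆ T, ∃ j ∈ T, j ∉ P ∧ ∃ ρ, 0 ≤ ρ ∧ ∑ i ∈ P, s i ≤ c ∧ c < s j + ∑ i ∈ P, s i ∧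
      (∀ i ∈ P, ρ * s i ≤ w i) ∧ ρ * s j ≤ w j ∧
      (∀ i ∈ T, i ∉ P → i ≠ j → w i ≤ ρ * s i) := by
  intro n
  induction n with
  | zero =>
    intro T hT c hc hcs
    rw [Finset.card_eq_zero] at hT
    subst hT
    simp at hcs
    linarith
  | succ n ih =>
    intro T hT c hc hcs
    have hTne : T.Nonempty := by
      rw [← Finset.card_pos, hT]; omega
    obtain ⟨j₀, hj₀T, hmax⟩ := Finset.exists_max_image T (fun i => w i / s i) hTne
    by_cases hcase : c < s j₀
    · -- take P = ∅, j = j₀, ρ = density of j₀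
      refine ⟨∅, Finset.empty_subset _, j₀, hj₀T, Finset.notMem_empty _,
        w j₀ / s j₀, ?_, ?_, ?_, ?_, ?_, ?_⟩
      · exact div_nonneg (hw j₀) (hs j₀).le
      · simpa using hc
      · simpa using hcase
      · intro i hi; simp at hi
      · rw [div_mul_cancel₀]; exact (hs j₀).ne'
      · intro i hiT _ _
        have := hmax i hiT
        rw [div_le_div_iff₀ (hs i) (hs j₀)] at this
        rw [div_mul_eq_mul_div, le_div_iff₀ (hs j₀)]
        linarith
    · -- s j₀ ≤ c : recurse on T.erase j₀ with capacity c - s j₀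
      push_neg at hcase
      have hT' : (T.erase j₀).card = n := by
        rw [Finset.card_erase_of_mem hj₀T, hT]; rfl
      have hsum : ∑ i ∈ T, s i = s j₀ + ∑ i ∈ T.erase j₀, s i :=
        (Finset.add_sum_erase T s hj₀T).symm
      obtain ⟨P', hP'sub, j, hjT', hjP', ρ, hρ0, hP's, hP'c, hP'w, hjw, hrest⟩ :=
        ih (T.erase j₀) hT' (c - s j₀) (by linarith) (by rw [hsum] at hcs; linarith)
      have hj₀P' : j₀ ∉ P' := fun h => (Finset.mem_erase.mp (hP'sub h)).1 rfl
      have hjne : j ≠ j₀ := (Finset.mem_erase.mp hjT').1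
      refine ⟨insert j₀ P', ?_, j, Finset.mem_of_mem_erase hjT', ?_, ρ, hρ0, ?_, ?_, ?_, hjw, ?_⟩
      · exact Finset.insert_subset hj₀T (hP'sub.trans (Finset.erase_subset _ _))
      · simp [hjP', hjne]
      · rw [Finset.sum_insert hj₀P']; linarith
      · rw [Finset.sum_insert hj₀P']; linarith
      · intro i hi
        rcases Finset.mem_insert.mp hi with heq | hi
        · -- ρ * s j₀ ≤ w j₀ via ρ ≤ w j / s j ≤ w j₀ / s j₀
          rw [heq]
          have h1 : ρ ≤ w j / s j := by
            rw [le_div_iff₀ (hs j)]; linarith [hjw]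
          have h2 : w j / s j ≤ w j₀ / s j₀ := hmax j (Finset.mem_of_mem_erase hjT')
          have h3 : ρ ≤ w j₀ / s j₀ := h1.trans h2
          calc ρ * s j₀ ≤ (w j₀ / s j₀) * s j₀ := by
                exact mul_le_mul_of_nonneg_right h3 (hs j₀).le
            _ = w j₀ := by rw [div_mul_cancel₀]; exact (hs j₀).ne'
        · exact hP'w i hi
      · intro i hiT hiP hij
        have hine : i ≠ j₀ := fun h => hiP (by rw [h]; exact Finset.mem_insert_self _ _)
        exact hrest i (Finset.mem_erase.mpr ⟨hine, hiT⟩) (fun h => hiP (Finset.mem_insert_of_mem h)) hij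

/-- Key combinatorial lemma: for sizes in (0,1], nonnegative weights and `0 < d ≤ 1`,
any set `S*` of total size at most 1 contains either a subset of total size at most `d`
and weight at least `(d/2)·w(S*)`, or a single element of weight at least `(d/2)·w(S*)`. -/
theorem knapsack_prefix_lemma (ι : Type*) [DecidableEq ι] (s w : ι → ℝ)
    (hs : ∀ i, 0 < s i ∧ s i ≤ 1) (hw : ∀ i, 0 ≤ w i)
    (d : ℝ) (hd : 0 < d) (hd1 : d ≤ 1)
    (Sstar : Finset ι) (hSstar : ∑ i ∈ Sstar, s i ≤ 1) :
    (∃ S ⊆ Sstar, ∑ i ∈ S, s i ≤ d ∧ d / 2 * ∑ i ∈ Sstar, w i ≤ ∑ i ∈ S, w i) ∨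
    (∃ i ∈ Sstar, d / 2 * ∑ j ∈ Sstar, w j ≤ w i) := by
  have hspos : ∀ i, 0 < s i := fun i => (hs i).1
  set W := ∑ i ∈ Sstar, w i with hW
  have hW0 : 0 ≤ W := Finset.sum_nonneg fun i _ => hw i
  by_cases hfit : ∑ i ∈ Sstar, s i ≤ d
  · left
    exact ⟨Sstar, Finset.Subset.refl _, hfit, by nlinarith⟩
  · push_neg at hfit
    obtain ⟨P, hPsub, j, hjS, hjP, ρ, hρ0, hPs, hPc, hPw, hjw, hrest⟩ :=
      greedy_prefix s w hspos hw Sstar.card Sstar rfl d hd.le hfit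
    set Q : Finset ι := insert j P with hQ
    have hQsub : Q ⊆ Sstar := Finset.insert_subset hjS hPsub
    have hsQ : ∑ i ∈ Q, s i = s j + ∑ i ∈ P, s i := Finset.sum_insert hjP
    have hwQ : ∑ i ∈ Q, w i = w j + ∑ i ∈ P, w i := Finset.sum_insert hjP
    -- weight of Q bounded below by ρ * size Q
    have hρQ : ρ * ∑ i ∈ Q, s i ≤ ∑ i ∈ Q, w i := by
      rw [Finset.mul_sum]
      apply Finset.sum_le_sum
      intro i hi
      rcases Finset.mem_insert.mp hi with heq | hi
      · rw [heq]; exact hjw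
      · exact hPw i hi
    -- weight of rest bounded above
    have hρR : ∑ i ∈ Sstar \ Q, w i ≤ ρ * ∑ i ∈ Sstar \ Q, s i := by
      rw [Finset.mul_sum]
      apply Finset.sum_le_sum
      intro i hi
      obtain ⟨hiS, hiQ⟩ := Finset.mem_sdiff.mp hi
      have hiP : i ∉ P := fun h => hiQ (Finset.mem_insert_of_mem h)
      have hij : i ≠ j := fun h => hiQ (by rw [h]; exact Finset.mem_insert_self _ _)
      exact hrest i hiS hiP hij
    have hsplitW : ∑ i ∈ Sstar \ Q, w i + ∑ i ∈ Q, w i = W :=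
      Finset.sum_sdiff hQsub
    have hsplitS : ∑ i ∈ Sstar \ Q, s i + ∑ i ∈ Q, s i = ∑ i ∈ Sstar, s i :=
      Finset.sum_sdiff hQsub
    -- key inequality: d * W ≤ w(Q)
    have hdQ : d < ∑ i ∈ Q, s i := by rw [hsQ]; exact hPc
    have hρd : ρ * d ≤ ∑ i ∈ Q, w i := by nlinarith
    have hkey : d * W ≤ ∑ i ∈ Q, w i := by
      set A := ∑ i ∈ Q, w i
      set R := ∑ i ∈ Sstar \ Q, w i
      set σQ := ∑ i ∈ Q, s i
      set σR := ∑ i ∈ Sstar \ Q, s i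
      have hσR1 : σR ≤ 1 - d := by linarith
      have h1 : d * R ≤ d * (ρ * σR) := mul_le_mul_of_nonneg_left hρR hd.le
      have h2 : ρ * σR ≤ ρ * (1 - d) := mul_le_mul_of_nonneg_left hσR1 hρ0
      have h2' : d * (ρ * σR) ≤ d * (ρ * (1 - d)) := mul_le_mul_of_nonneg_left h2 hd.le
      have h3 : d * (ρ * (1 - d)) = (1 - d) * (ρ * d) := by ring
      have h4 : (1 - d) * (ρ * d) ≤ (1 - d) * A :=
        mul_le_mul_of_nonneg_left hρd (by linarith)
      have h5 : (1 - d) * A = A - d * A := by ring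
      have h6 : d * W = d * R + d * A := by rw [← hsplitW]; ring
      linarith
    -- conclude
    by_cases hcase : d / 2 * W ≤ ∑ i ∈ P, w i
    · left
      exact ⟨P, hPsub, hPs, hcase⟩
    · right
      refine ⟨j, hjS, ?_⟩
      push_neg at hcase
      nlinarith [hwQ]
end
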